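/- For every process tree T over an alphabet Σ there exists a safe and sound free-choice workflow net W (with labeling into Σ∪{τ}) whose language equals the language of the process tree: L(W) = L(T). -/

import Mathlib

/-- A Petri net over places `P`, transitions `T`, and alphabet `A`.
`pre p t` means there is an arc from place `p` to transition `t`;
`post t p` means there is an arc from transition `t` to place `p`;
`label t = none` means that `t` is silent (labeled `τ`). -/
structure PetriNet (P T A : Type) where
  pre : P → T → Prop
  post : T → P → Prop
  label : T → Option A

namespace PetriNet

variable {P T A : Type}

/-- A transition is enabled if all of its input places are marked. -/
def Enabled (N : PetriNet P T A) (M : P → ℕ) (t : T) : Prop :=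
  ∀ p, N.pre p t → 0 < M p

/-- The marking obtained from `M` by firing the transition `t`. -/
noncomputable def fire (N : PetriNet P T A) (M : P → ℕ) (t : T) : P → ℕ :=
  fun p =>
    letI := Classical.propDecidable
    if N.pre p t ∧ ¬N.post t p then M p - 1
    else if ¬N.pre p t ∧ N.post t p then M p + 1
    else M p

/-- `Fires N M σ M'`: the firing sequence `σ` is enabled at `M` and leads to `M'`,
written `(N,M)[σ⟩(N,M')`. -/
inductive Fires (N : PetriNet P T A) : (P → ℕ) → List T → (P → ℕ) → Prop
  | nil (M : P → ℕ) : Fires N M [] M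
  | cons {M M' : P → ℕ} {t : T} {σ : List T} :
      N.Enabled M t → Fires N (N.fire M t) σ M' → Fires N M (t :: σ) M'

/-- The set of markings reachable from `M0`. -/
def reach (N : PetriNet P T A) (M0 : P → ℕ) : Set (P → ℕ) :=
  {M | ∃ σ : List T, Fires N M0 σ M}

/-- A system is `b`-bounded if every reachable marking has at most `b` tokens on each place. -/
def Bounded (N : PetriNet P T A) (M0 : P → ℕ) (b : ℕ) : Prop :=
  ∀ M ∈ reach N M0, ∀ p, M p ≤ b

/-- A system is live if from every reachable marking every transition can be enabled again. -/
def Live (N : PetriNet P T A) (M0 : P → ℕ) : Prop :=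
  ∀ M ∈ reach N M0, ∀ t : T, ∃ M' ∈ reach N M, N.Enabled M' t

/-- Free choice: any two transitions have equal or disjoint sets of input places. -/
def FreeChoice (N : PetriNet P T A) : Prop :=
  ∀ t t' : T, (∀ p, N.pre p t ↔ N.pre p t') ∨ ∀ p, ¬(N.pre p t ∧ N.pre p t')

/-- A firing sequence is biased if any two distinct transitions occurring in it
have disjoint sets of input places. -/
def Biased (N : PetriNet P T A) (σ : List T) : Prop :=
  ∀ t ∈ σ, ∀ t' ∈ σ, t ≠ t' → ∀ p, ¬(N.pre p t ∧ N.pre p t')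

/-- Undirected adjacency of the underlying bipartite graph. -/
def Adj (N : PetriNet P T A) : P ⊕ T → P ⊕ T → Prop
  | Sum.inl p, Sum.inr t => N.pre p t ∨ N.post t p
  | Sum.inr t, Sum.inl p => N.pre p t ∨ N.post t p
  | _, _ => False

/-- The underlying graph of the net is weakly connected. -/
def WeaklyConnected (N : PetriNet P T A) : Prop :=
  ∀ x y : P ⊕ T, Relation.ReflTransGen N.Adj x y

end PetriNet

open PetriNet

/-- An accepting system: a Petri net with an initial and a final marking. -/
structure AcceptingSystem (P T A : Type) where
  net : PetriNet P T A
  init : P → ℕ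
  final : P → ℕ

/-- A complete firing sequence leads from the initial to the final marking. -/
def CompleteFiring {P T A : Type} (S : AcceptingSystem P T A) (σ : List T) : Prop :=
  Fires S.net S.init σ S.final

/-- A move: `none` in a component stands for the no-move symbol `≫`. -/
abbrev Move (A T : Type) := Option A × Option T

/-- Legal moves: synchronous moves, log moves, and model moves. -/
def LegalMove {P T A : Type} (N : PetriNet P T A) : Move A T → Prop
  | (some a, some t) => N.label t = some a
  | (some _, none) => True
  | (none, some _) => True
  | (none, none) => False

/-- `γ` is an alignment between the trace `σ` and the accepting system `S`. -/
def IsAlignment {P T A : Type} (S : AcceptingSystem P T A) (σ : List A)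
    (γ : List (Move A T)) : Prop :=
  (∀ m ∈ γ, LegalMove S.net m) ∧
  γ.filterMap Prod.fst = σ ∧
  CompleteFiring S (γ.filterMap Prod.snd)

/-- The cost of an alignment with respect to a cost function. -/
def alignCost {A T : Type} (c : Move A T → NNReal) (γ : List (Move A T)) : NNReal :=
  (γ.map c).sum
/-- The short-circuited net: a fresh transition `t̄` (the `Sum.inr` transition) with input
place `o` and output place `i` is added. -/
def shortCircuit {P T A : Type} (N : PetriNet P T A) (i o : P) : PetriNet P (T ⊕ Unit) A where
  pre p t :=
    match t with
    | Sum.inl t => N.pre p t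
    | Sum.inr _ => p = o
  post t p :=
    match t with
    | Sum.inl t => N.post t p
    | Sum.inr _ => p = i
  label t :=
    match t with
    | Sum.inl t => N.label t
    | Sum.inr _ => none

/-- One directed step in the underlying graph of a net. -/
def DStep {P T A : Type} (N : PetriNet P T A) : P ⊕ T → P ⊕ T → Prop
  | Sum.inl p, Sum.inr t => N.pre p t
  | Sum.inr t, Sum.inl p => N.post t p
  | _, _ => False

/-- The underlying graph of the net is strongly connected. -/
def StronglyConnected {P T A : Type} (N : PetriNet P T A) : Prop :=
  ∀ x y : P ⊕ T, Relation.ReflTransGen (DStep N) x y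

/-- The marking with a single token on `p0`. -/
def unitM {P : Type} [DecidableEq P] (p0 : P) : P → ℕ :=
  fun p => if p = p0 then 1 else 0

/-- A workflow net: a Petri net with a source place `i` and a sink place `o` without output
transitions such that the short-circuited net is strongly connected. -/
structure WorkflowNet (P T A : Type) where
  net : PetriNet P T A
  i : P
  o : P
  sink : ∀ t : T, ¬ net.pre o t
  connected : StronglyConnected (shortCircuit net i o)

/-- Soundness of a workflow net: option to complete, proper completion,
and no dead transitions. -/
def WSound {P T A : Type} [DecidableEq P] (W : WorkflowNet P T A) : Prop :=
  (∀ M ∈ reach W.net (unitM W.i), unitM W.o ∈ reach W.net M) ∧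
  (∀ M ∈ reach W.net (unitM W.i), (∀ p, unitM W.o p ≤ M p) → M = unitM W.o) ∧
  (∀ t : T, ∃ M ∈ reach W.net (unitM W.i), W.net.Enabled M t)
/-- Process trees over the alphabet `A`: the silent activity `τ`, activities, and the
operators sequence `→`, exclusive choice `×`, parallel `∧`, and loop `↺`. -/
inductive ProcessTree (A : Type) where
  | silent : ProcessTree A
  | act : A → ProcessTree A
  | seq : List (ProcessTree A) → ProcessTree A
  | xor : List (ProcessTree A) → ProcessTree A
  | par : List (ProcessTree A) → ProcessTree A
  | loop : ProcessTree A → ProcessTree A → ProcessTree A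

/-- The operators of a process tree take at least one argument. -/
inductive ProcessTree.WF {A : Type} : ProcessTree A → Prop
  | silent : WF .silent
  | act (a : A) : WF (.act a)
  | seq (ts : List (ProcessTree A)) : ts ≠ [] → (∀ t ∈ ts, WF t) → WF (.seq ts)
  | xor (ts : List (ProcessTree A)) : ts ≠ [] → (∀ t ∈ ts, WF t) → WF (.xor ts)
  | par (ts : List (ProcessTree A)) : ts ≠ [] → (∀ t ∈ ts, WF t) → WF (.par ts)
  | loop (t1 t2 : ProcessTree A) : WF t1 → WF t2 → WF (.loop t1 t2)

/-- The shuffle `x ⧢ y` of two words: all words `v1w1⋯vkwk` with `x = v1⋯vk`, `y = w1⋯wk`. -/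
def wordShuffle {A : Type} (x y : List A) : Language A :=
  {w | ∃ vs ws : List (List A), vs.length = ws.length ∧
        x = vs.flatten ∧ y = ws.flatten ∧ w = (List.zipWith (· ++ ·) vs ws).flatten}

/-- The shuffle of two languages. -/
def Language.shuffle {A : Type} (L1 L2 : Language A) : Language A :=
  {w | ∃ x ∈ L1, ∃ y ∈ L2, w ∈ wordShuffle x y}

mutual
  /-- The language of a process tree. -/
  def ptLang {A : Type} : ProcessTree A → Language A
    | .silent => 1
    | .act a => {[a]}
    | .seq ts => ptSeqLang ts
    | .xor ts => ptXorLang ts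
    | .par ts => ptParLang ts
    | .loop t1 t2 => ptLang t1 * KStar.kstar (ptLang t2 * ptLang t1)

  /-- The concatenation `L(T1)⋯L(Tn)` of the languages of a list of process trees. -/
  def ptSeqLang {A : Type} : List (ProcessTree A) → Language A
    | [] => 1
    | t :: ts => ptLang t * ptSeqLang ts

  /-- The union `L(T1) ∪ … ∪ L(Tn)` of the languages of a list of process trees. -/
  def ptXorLang {A : Type} : List (ProcessTree A) → Language A
    | [] => 0
    | t :: ts => ptLang t + ptXorLang ts

  /-- The shuffle `L(T1) ⧢ … ⧢ L(Tn)` of the languages of a list of process trees. -/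
  def ptParLang {A : Type} : List (ProcessTree A) → Language A
    | [] => 1
    | t :: ts => (ptLang t).shuffle (ptParLang ts)
end
/-- The language of a workflow net: words obtained from firing sequences leading from `[i]`
to `[o]` by applying the labeling and deleting `τ`'s. -/
def wfLang {P T A : Type} [DecidableEq P] (W : WorkflowNet P T A) : Language A :=
  {w | ∃ ρ : List T, Fires W.net (unitM W.i) ρ (unitM W.o) ∧ w = ρ.filterMap W.net.label}

section EPath

variable {S E A : Type}

/-- Paths in a labeled graph given by source/target maps, as lists of edges. -/
inductive EPath (src tgt : E → S) : S → List E → S → Prop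
  | nil (s : S) : EPath src tgt s [] s
  | cons {s s' : S} {e : E} {es : List E} :
      src e = s → EPath src tgt (tgt e) es s' → EPath src tgt s (e :: es) s'

theorem EPath.append {src tgt : E → S} {s s' s'' : S} {es es' : List E}
    (h : EPath src tgt s es s') (h' : EPath src tgt s' es' s'') :
    EPath src tgt s (es ++ es') s'' := by
  induction h with
  | nil => exact h'
  | cons he _ ih => exact .cons he (ih h')

theorem EPath.single {src tgt : E → S} {e : E} {s : S} (h : src e = s) :
    EPath src tgt s [e] (tgt e) := .cons h (.nil _)

/-- Paths are preserved by graph homomorphisms. -/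
theorem EPath.map {S' E' : Type} {src tgt : E → S} {src' tgt' : E' → S'}
    (f : S → S') (g : E → E') (hs : ∀ e, src' (g e) = f (src e))
    (ht : ∀ e, tgt' (g e) = f (tgt e)) {s s' : S} {es : List E}
    (h : EPath src tgt s es s') : EPath src' tgt' (f s) (es.map g) (f s') := by
  induction h with
  | nil => exact .nil _
  | cons he _ ih => exact .cons (by rw [hs, he]) ((ht _) ▸ ih)

theorem EPath.sink_nil {src tgt : E → S} {s s' : S} {es : List E}
    (hs : ∀ e, src e ≠ s) (h : EPath src tgt s es s') : es = [] ∧ s' = s := by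
  cases h with
  | nil => exact ⟨rfl, rfl⟩
  | cons he _ => exact absurd he (hs _)

end EPath

/-- An NFA-like net: a finite labeled graph with initial and final states,
the final state being a sink and every state being reachable and co-reachable. -/
structure GNet (A : Type) where
  S : Type
  E : Type
  fS : Fintype S
  fE : Fintype E
  src : E → S
  tgt : E → S
  lab : E → Option A
  i : S
  o : S
  sink : ∀ e, src e ≠ o
  reach_i : ∀ s, ∃ es, EPath src tgt i es s
  reach_o : ∀ s, ∃ es, EPath src tgt s es o

attribute [instance] GNet.fS GNet.fE

/-- The words along paths from `s` to `t`. -/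
def GNet.pathsTo {A : Type} (N : GNet A) (s t : N.S) : Language A :=
  {w | ∃ es, EPath N.src N.tgt s es t ∧ w = es.filterMap N.lab}

def GNet.lang {A : Type} (N : GNet A) : Language A := N.pathsTo N.i N.o

section Master

variable {A : Type} (N : GNet A)

noncomputable def GNet.eS : N.S ≃ Fin (Fintype.card N.S) := Fintype.equivFin N.S
noncomputable def GNet.eE : N.E ≃ Fin (Fintype.card N.E) := Fintype.equivFin N.E

/-- The state machine Petri net associated to a `GNet`. -/
noncomputable def GNet.pn : PetriNet (Fin (Fintype.card N.S)) (Fin (Fintype.card N.E)) A where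
  pre p t := p = N.eS (N.src (N.eE.symm t))
  post t p := p = N.eS (N.tgt (N.eE.symm t))
  label t := N.lab (N.eE.symm t)

theorem unitM_inj {P : Type} [DecidableEq P] {a b : P} (h : unitM a = unitM b) : a = b := by
  have := congrFun h a
  by_cases hab : a = b
  · exact hab
  · simp [unitM, hab] at this

theorem GNet.fire_unit (t : Fin (Fintype.card N.E)) (s : N.S)
    (hsrc : N.src (N.eE.symm t) = s) :
    N.pn.fire (unitM (N.eS s)) t = unitM (N.eS (N.tgt (N.eE.symm t))) := by
  subst hsrc
  funext p
  simp only [PetriNet.fire, GNet.pn, unitM]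
  by_cases h1 : p = N.eS (N.src (N.eE.symm t)) <;>
    by_cases h2 : p = N.eS (N.tgt (N.eE.symm t))
  · split_ifs <;> simp_all
  · split_ifs <;> simp_all
  · split_ifs <;> simp_all
  · split_ifs <;> simp_all

theorem GNet.enabled_iff (t : Fin (Fintype.card N.E)) (s : N.S) :
    N.pn.Enabled (unitM (N.eS s)) t ↔ N.src (N.eE.symm t) = s := by
  constructor
  · intro h
    have := h (N.eS (N.src (N.eE.symm t))) rfl
    by_cases hs : N.src (N.eE.symm t) = s
    · exact hs
    · have hne : N.eS (N.src (N.eE.symm t)) ≠ N.eS s := fun hc => hs (N.eS.injective hc)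
      simp [unitM, hne] at this
  · intro h p hp
    have : p = N.eS s := by rw [hp, h]
    simp [unitM, this]

theorem GNet.fires_to : ∀ (ρ : List (Fin (Fintype.card N.E))) (s : N.S) (M),
    Fires N.pn (unitM (N.eS s)) ρ M →
    ∃ es s', ρ = es.map N.eE ∧ EPath N.src N.tgt s es s' ∧ M = unitM (N.eS s') := by
  intro ρ
  induction ρ with
  | nil =>
    intro s M h
    cases h
    exact ⟨[], s, rfl, .nil s, rfl⟩
  | cons t ρ ih =>
    intro s M h
    cases h with
    | cons hen hfire =>
      have hsrc : N.src (N.eE.symm t) = s := (N.enabled_iff t s).1 hen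
      rw [N.fire_unit t s hsrc] at hfire
      obtain ⟨es, s', rfl, hp, rfl⟩ := ih _ _ hfire
      exact ⟨N.eE.symm t :: es, s', by simp, .cons hsrc hp, rfl⟩

theorem GNet.fires_of {s s' : N.S} {es : List N.E} (h : EPath N.src N.tgt s es s') :
    Fires N.pn (unitM (N.eS s)) (es.map N.eE) (unitM (N.eS s')) := by
  induction h with
  | nil => exact .nil _
  | @cons s s' e es he _ ih =>
    refine .cons ((N.enabled_iff _ _).2 (by simp [he])) ?_
    rw [N.fire_unit _ s (by simp [he])]
    simpa using ih

theorem GNet.word_eq (es : List N.E) :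
    (es.map N.eE).filterMap N.pn.label = es.filterMap N.lab := by
  rw [List.filterMap_map]
  congr 1
  funext e
  simp [GNet.pn]

theorem GNet.master :
    ∃ (np nt : ℕ) (W : WorkflowNet (Fin np) (Fin nt) A),
      Bounded W.net (unitM W.i) 1 ∧ WSound W ∧ W.net.FreeChoice ∧ wfLang W = N.lang := by
  classical
  -- auxiliary DStep facts for the short-circuited net
  set SC := shortCircuit N.pn (N.eS N.i) (N.eS N.o) with hSC
  have dstep1 : ∀ e : N.E, DStep SC (Sum.inl (N.eS (N.src e))) (Sum.inr (Sum.inl (N.eE e))) := by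
    intro e; show SC.pre _ _; show N.pn.pre _ _; show _ = _; simp
  have dstep2 : ∀ e : N.E, DStep SC (Sum.inr (Sum.inl (N.eE e))) (Sum.inl (N.eS (N.tgt e))) := by
    intro e; show SC.post _ _; show N.pn.post _ _; show _ = _; simp
  have dbar1 : DStep SC (Sum.inl (N.eS N.o)) (Sum.inr (Sum.inr ())) := by
    show SC.pre _ _; rfl
  have dbar2 : DStep SC (Sum.inr (Sum.inr ())) (Sum.inl (N.eS N.i)) := by
    show SC.post _ _; rfl
  have dpath : ∀ {s s' : N.S} {es : List N.E}, EPath N.src N.tgt s es s' →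
      Relation.ReflTransGen (DStep SC) (Sum.inl (N.eS s)) (Sum.inl (N.eS s')) := by
    intro s s' es h
    induction h with
    | nil => exact .refl
    | @cons s s' e es he _ ih =>
      subst he
      exact .trans (.trans (.single (dstep1 e)) (.single (dstep2 e))) ih
  have hto_o : ∀ x, Relation.ReflTransGen (DStep SC) x (Sum.inl (N.eS N.o)) := by
    intro x
    match x with
    | Sum.inl p =>
      obtain ⟨es, hp⟩ := N.reach_o (N.eS.symm p)
      have := dpath hp
      simpa using this
    | Sum.inr (Sum.inl t) =>
      have h2 := dstep2 (N.eE.symm t)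
      rw [Equiv.apply_symm_apply] at h2
      refine Relation.ReflTransGen.head h2 ?_
      obtain ⟨es, hp⟩ := N.reach_o (N.tgt (N.eE.symm t))
      exact dpath hp
    | Sum.inr (Sum.inr ()) =>
      refine Relation.ReflTransGen.head dbar2 ?_
      obtain ⟨es, hp⟩ := N.reach_o N.i; exact dpath hp
  have hfrom_i : ∀ y, Relation.ReflTransGen (DStep SC) (Sum.inl (N.eS N.i)) y := by
    intro y
    match y with
    | Sum.inl p =>
      obtain ⟨es, hp⟩ := N.reach_i (N.eS.symm p)
      have := dpath hp
      simpa using this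
    | Sum.inr (Sum.inl t) =>
      obtain ⟨es, hp⟩ := N.reach_i (N.src (N.eE.symm t))
      have h1 := dstep1 (N.eE.symm t)
      rw [Equiv.apply_symm_apply] at h1
      exact Relation.ReflTransGen.tail (dpath hp) h1
    | Sum.inr (Sum.inr ()) =>
      obtain ⟨es, hp⟩ := N.reach_o N.i
      exact Relation.ReflTransGen.tail (dpath hp) dbar1
  refine ⟨_, _, ⟨N.pn, N.eS N.i, N.eS N.o, ?_, ?_⟩, ?_, ⟨?_, ?_, ?_⟩, ?_, ?_⟩
  · -- sink
    intro t h
    exact N.sink (N.eE.symm t) (N.eS.injective h).symm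
  · -- connected
    intro x y
    exact (((hto_o x).trans (Relation.ReflTransGen.single dbar1)).trans
      (Relation.ReflTransGen.single dbar2)).trans (hfrom_i y)
  · -- bounded
    rintro M ⟨ρ, hf⟩ p
    obtain ⟨es, s', -, -, rfl⟩ := N.fires_to ρ N.i M hf
    unfold unitM
    split <;> simp
  · -- option to complete
    rintro M ⟨ρ, hf⟩
    obtain ⟨es, s', -, -, rfl⟩ := N.fires_to ρ N.i M hf
    obtain ⟨es', hp⟩ := N.reach_o s'
    exact ⟨es'.map N.eE, N.fires_of hp⟩
  · -- proper completion
    rintro M ⟨ρ, hf⟩ hge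
    obtain ⟨es, s', -, -, rfl⟩ := N.fires_to ρ N.i M hf
    have h1 := hge (N.eS N.o)
    by_cases h : N.eS N.o = N.eS s'
    · cases N.eS.injective h; rfl
    · simp [unitM, h] at h1
  · -- no dead transitions
    intro t
    obtain ⟨es, hp⟩ := N.reach_i (N.src (N.eE.symm t))
    exact ⟨unitM (N.eS (N.src (N.eE.symm t))), ⟨es.map N.eE, N.fires_of hp⟩,
      (N.enabled_iff t _).2 rfl⟩
  · -- free choice
    intro t t'
    by_cases h : N.src (N.eE.symm t) = N.src (N.eE.symm t')
    · left; intro p; simp only [GNet.pn, h]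
    · right; rintro p ⟨h1, h2⟩
      have h1' : p = N.eS (N.src (N.eE.symm t)) := h1
      have h2' : p = N.eS (N.src (N.eE.symm t')) := h2
      exact h (N.eS.injective (h1' ▸ h2'))
  · -- language
    ext w
    constructor
    · rintro ⟨ρ, hf, rfl⟩
      obtain ⟨es, s', rfl, hp, hM⟩ := N.fires_to ρ N.i _ hf
      have hs' : s' = N.o := N.eS.injective (unitM_inj hM.symm)
      subst hs'
      exact ⟨es, hp, (N.word_eq es)⟩
    · rintro ⟨es, hp, rfl⟩
      exact ⟨es.map N.eE, N.fires_of hp, (N.word_eq es).symm⟩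

end Master
open Computability

section Shuffle

variable {A : Type}

theorem List.filterMap_cons_toList {B : Type} (f : A → Option B) (a : A)
    (l : List A) : (a :: l).filterMap f = (f a).toList ++ l.filterMap f := by
  cases h : f a <;> simp [List.filterMap_cons, h]

/-- Interleavings of two words, as an inductive relation. -/
inductive Sh : List A → List A → List A → Prop
  | nil : Sh [] [] []
  | left {x y w : List A} (a : A) : Sh x y w → Sh (a :: x) y (a :: w)
  | right {x y w : List A} (a : A) : Sh x y w → Sh x (a :: y) (a :: w)

theorem Sh.append_left {x y w : List A} (v : List A) (h : Sh x y w) :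
    Sh (v ++ x) y (v ++ w) := by
  induction v with
  | nil => exact h
  | cons a v ih => exact .left a ih

theorem Sh.append_right {x y w : List A} (v : List A) (h : Sh x y w) :
    Sh x (v ++ y) (v ++ w) := by
  induction v with
  | nil => exact h
  | cons a v ih => exact .right a ih

theorem Sh.nil_nil {w : List A} (h : Sh [] [] w) : w = [] := by cases h; rfl

theorem Sh.self_left (x : List A) : Sh x [] x := by
  induction x with
  | nil => exact .nil
  | cons a x ih => exact .left a ih

theorem Sh.self_right (y : List A) : Sh [] y y := by
  induction y with
  | nil => exact .nil
  | cons a y ih => exact .right a ih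

theorem Sh.cons_nil {a : A} {x w : List A} (h : Sh (a :: x) [] w) :
    ∃ w', w = a :: w' ∧ Sh x [] w' := by
  cases h with
  | left _ h => exact ⟨_, rfl, h⟩

theorem Sh.nil_cons {b : A} {y w : List A} (h : Sh [] (b :: y) w) :
    ∃ w', w = b :: w' ∧ Sh [] y w' := by
  cases h with
  | right _ h => exact ⟨_, rfl, h⟩

theorem Sh.cons_cons {a b : A} {x y w : List A} (h : Sh (a :: x) (b :: y) w) :
    (∃ w', w = a :: w' ∧ Sh x (b :: y) w') ∨ (∃ w', w = b :: w' ∧ Sh (a :: x) y w') := by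
  cases h with
  | left _ h => exact Or.inl ⟨_, rfl, h⟩
  | right _ h => exact Or.inr ⟨_, rfl, h⟩

theorem Sh.nil_left_eq {y w : List A} (h : Sh [] y w) : w = y := by
  induction y generalizing w with
  | nil => exact h.nil_nil
  | cons b y ih =>
    obtain ⟨w', rfl, h'⟩ := h.nil_cons
    rw [ih h']

theorem Sh.nil_right_eq {x w : List A} (h : Sh x [] w) : w = x := by
  induction x generalizing w with
  | nil => exact h.nil_nil
  | cons a x ih =>
    obtain ⟨w', rfl, h'⟩ := h.cons_nil
    rw [ih h']

theorem wordShuffle_iff_sh {x y w : List A} : w ∈ wordShuffle x y ↔ Sh x y w := by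
  constructor
  · rintro ⟨vs, ws, hlen, rfl, rfl, rfl⟩
    induction vs generalizing ws with
    | nil =>
      rw [List.length_eq_zero_iff.mp hlen.symm]
      exact .nil
    | cons v vs ih =>
      cases ws with
      | nil => simp at hlen
      | cons w0 ws =>
        have h := (Sh.append_right (x := vs.flatten) w0 (ih ws (by simpa using hlen))).append_left v
        simpa [List.append_assoc] using h
  · intro h
    induction h with
    | nil => exact ⟨[], [], rfl, rfl, rfl, rfl⟩
    | @left x y w a h ih =>
      obtain ⟨vs, ws, hlen, hx, hy, hw⟩ := ih
      exact ⟨[a] :: vs, [] :: ws, by simp [hlen], by simp [hx], by simp [hy], by simp [hw]⟩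
    | @right x y w a h ih =>
      obtain ⟨vs, ws, hlen, hx, hy, hw⟩ := ih
      exact ⟨[] :: vs, [a] :: ws, by simp [hlen], by simp [hx], by simp [hy], by simp [hw]⟩

theorem mem_shuffle_iff {L1 L2 : Language A} {w : List A} :
    w ∈ L1.shuffle L2 ↔ ∃ x ∈ L1, ∃ y ∈ L2, Sh x y w := by
  unfold Language.shuffle
  simp only [Set.mem_setOf_eq, wordShuffle_iff_sh]
  exact Iff.rfl

theorem shuffle_one (L : Language A) : L.shuffle 1 = L := by
  ext w
  rw [mem_shuffle_iff]
  constructor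
  · rintro ⟨x, hx, y, hy, hsh⟩
    rw [Language.mem_one] at hy
    subst hy
    rwa [hsh.nil_right_eq]
  · intro hw
    exact ⟨w, hw, [], rfl, Sh.self_left w⟩

theorem kstar_cons {L : Language A} {a x : List A} (ha : a ∈ L) (hx : x ∈ L∗) :
    a ++ x ∈ L∗ := by
  rw [Language.mem_kstar] at *
  obtain ⟨S, rfl, hS⟩ := hx
  exact ⟨a :: S, rfl, fun y hy => by
    rcases List.mem_cons.mp hy with rfl | hy
    exacts [ha, hS y hy]⟩

end Shuffle
section Combinators

variable {A : Type}

/-- Generic word computation for embedded edge lists. -/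
theorem filterMap_emb {E E' : Type} (g : E → E') (lab' : E' → Option A) (lab : E → Option A)
    (h : ∀ e, lab' (g e) = lab e) (es : List E) :
    (es.map g).filterMap lab' = es.filterMap lab := by
  rw [List.filterMap_map]
  exact List.filterMap_congr (fun e _ => h e)

/-- The one-edge net. -/
def GNet.base (a : Option A) : GNet A where
  S := Bool
  E := Unit
  fS := inferInstance
  fE := inferInstance
  src _ := false
  tgt _ := true
  lab _ := a
  i := false
  o := true
  sink _ := Bool.false_ne_true
  reach_i s := by
    cases s
    · exact ⟨[], .nil _⟩
    · exact ⟨[()], .single rfl⟩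
  reach_o s := by
    cases s
    · exact ⟨[()], .single rfl⟩
    · exact ⟨[], .nil _⟩

theorem GNet.base_lang (a : Option A) : (GNet.base a).lang = {w | w = a.toList} := by
  ext w
  constructor
  · rintro ⟨es, hp, rfl⟩
    cases hp with
    | cons he hp' =>
      obtain ⟨rfl, -⟩ := hp'.sink_nil (fun e => Bool.false_ne_true)
      cases a <;> rfl
  · rintro rfl
    exact ⟨[()], .single rfl, by cases a <;> rfl⟩

/-- Sequential composition. -/
def GNet.seqC (N1 N2 : GNet A) : GNet A where
  S := N1.S ⊕ N2.S
  E := (N1.E ⊕ N2.E) ⊕ Unit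
  fS := inferInstance
  fE := inferInstance
  src e :=
    match e with
    | .inl (.inl e) => .inl (N1.src e)
    | .inl (.inr e) => .inr (N2.src e)
    | .inr _ => .inl N1.o
  tgt e :=
    match e with
    | .inl (.inl e) => .inl (N1.tgt e)
    | .inl (.inr e) => .inr (N2.tgt e)
    | .inr _ => .inr N2.i
  lab e :=
    match e with
    | .inl (.inl e) => N1.lab e
    | .inl (.inr e) => N2.lab e
    | .inr _ => none
  i := .inl N1.i
  o := .inr N2.o
  sink e := by
    rcases e with (e | e) | u
    · simp
    · intro h
      exact N2.sink e (Sum.inr.inj h)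
    · simp
  reach_i s := by
    rcases s with s | s
    · obtain ⟨es, hp⟩ := N1.reach_i s
      exact ⟨es.map (fun e => .inl (.inl e)),
        hp.map Sum.inl (fun e => Sum.inl (Sum.inl e)) (fun _ => by rfl) (fun _ => by rfl)⟩
    · obtain ⟨es1, hp1⟩ := N1.reach_i N1.o
      obtain ⟨es2, hp2⟩ := N2.reach_i s
      refine ⟨es1.map (fun e => .inl (.inl e)) ++ ((Sum.inr () : (N1.E ⊕ N2.E) ⊕ Unit) ::
        es2.map (fun e => .inl (.inr e))), ?_⟩
      exact (hp1.map Sum.inl (fun e => Sum.inl (Sum.inl e)) (fun _ => by rfl) (fun _ => by rfl)).append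
        (.cons rfl (hp2.map Sum.inr (fun e => Sum.inl (Sum.inr e)) (fun _ => by rfl) (fun _ => by rfl)))
  reach_o s := by
    rcases s with s | s
    · obtain ⟨es1, hp1⟩ := N1.reach_o s
      obtain ⟨es2, hp2⟩ := N2.reach_o N2.i
      refine ⟨es1.map (fun e => .inl (.inl e)) ++ ((Sum.inr () : (N1.E ⊕ N2.E) ⊕ Unit) ::
        es2.map (fun e => .inl (.inr e))), ?_⟩
      exact (hp1.map Sum.inl (fun e => Sum.inl (Sum.inl e)) (fun _ => by rfl) (fun _ => by rfl)).append
        (.cons rfl (hp2.map Sum.inr (fun e => Sum.inl (Sum.inr e)) (fun _ => by rfl) (fun _ => by rfl)))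
    · obtain ⟨es, hp⟩ := N2.reach_o s
      exact ⟨es.map (fun e => .inl (.inr e)),
        hp.map Sum.inr (fun e => Sum.inl (Sum.inr e)) (fun _ => by rfl) (fun _ => by rfl)⟩

theorem GNet.seqC_right (N1 N2 : GNet A) :
    ∀ {q x : (N1.seqC N2).S} {es}, EPath (N1.seqC N2).src (N1.seqC N2).tgt q es x →
      ∀ s : N2.S, q = Sum.inr s →
      ∃ s' es2, x = Sum.inr s' ∧ es = es2.map (fun e => Sum.inl (Sum.inr e)) ∧
        EPath N2.src N2.tgt s es2 s' := by
  intro q x es h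
  induction h with
  | nil =>
    rintro s rfl
    exact ⟨s, [], rfl, rfl, .nil s⟩
  | @cons q x e es he hp ih =>
    rintro s rfl
    rcases e with (e1 | e2) | u
    · exact absurd he (by simp [GNet.seqC])
    · obtain ⟨s', es2, rfl, rfl, hp2⟩ := ih (N2.tgt e2) rfl
      exact ⟨s', e2 :: es2, rfl, rfl, .cons (Sum.inr.inj he) hp2⟩
    · exact absurd he (by simp [GNet.seqC])

theorem GNet.seqC_cross (N1 N2 : GNet A) :
    ∀ {q x : (N1.seqC N2).S} {es}, EPath (N1.seqC N2).src (N1.seqC N2).tgt q es x →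
      ∀ s1 : N1.S, q = Sum.inl s1 → x = Sum.inr N2.o →
      ∃ es1 es2, es = (es1.map (fun e => Sum.inl (Sum.inl e)) ++
          (Sum.inr () :: es2.map (fun e => Sum.inl (Sum.inr e))) : List (N1.seqC N2).E) ∧
        EPath N1.src N1.tgt s1 es1 N1.o ∧ EPath N2.src N2.tgt N2.i es2 N2.o := by
  intro q x es h
  induction h with
  | nil =>
    rintro s1 rfl h
    simp at h
  | @cons q x e es he hp ih =>
    rintro s1 rfl rfl
    rcases e with (e1 | e2) | u
    · obtain ⟨es1, es2, rfl, hp1, hp2⟩ := ih (N1.tgt e1) rfl rfl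
      exact ⟨e1 :: es1, es2, rfl, .cons (Sum.inl.inj he) hp1, hp2⟩
    · exact absurd he (by simp [GNet.seqC])
    · obtain ⟨s', es2, hx, rfl, hp2⟩ := N1.seqC_right N2 hp N2.i rfl
      have hs' : s' = N2.o := (Sum.inr.inj hx).symm
      subst hs'
      have hs1 : N1.o = s1 := Sum.inl.inj he
      subst hs1
      exact ⟨[], es2, rfl, .nil _, hp2⟩

theorem GNet.seqC_word (N1 N2 : GNet A) (es1 : List N1.E) (es2 : List N2.E) :
    ((es1.map (fun e => Sum.inl (Sum.inl e))) ++
      ((Sum.inr () : (N1.seqC N2).E) :: es2.map (fun e => Sum.inl (Sum.inr e)))).filterMap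
      (N1.seqC N2).lab = es1.filterMap N1.lab ++ es2.filterMap N2.lab := by
  erw [List.filterMap_append, List.filterMap_cons_toList,
    filterMap_emb (fun e => (Sum.inl (Sum.inl e) : (N1.seqC N2).E)) (N1.seqC N2).lab N1.lab
      (fun e => rfl),
    filterMap_emb (fun e => (Sum.inl (Sum.inr e) : (N1.seqC N2).E)) (N1.seqC N2).lab N2.lab
      (fun e => rfl)]
  rfl

theorem GNet.seqC_lang (N1 N2 : GNet A) : (N1.seqC N2).lang = N1.lang * N2.lang := by
  ext w
  rw [Language.mem_mul]
  constructor
  · rintro ⟨es, hp, rfl⟩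
    obtain ⟨es1, es2, rfl, hp1, hp2⟩ := N1.seqC_cross N2 hp N1.i rfl rfl
    exact ⟨es1.filterMap N1.lab, ⟨es1, hp1, rfl⟩, es2.filterMap N2.lab, ⟨es2, hp2, rfl⟩,
      (N1.seqC_word N2 es1 es2).symm⟩
  · rintro ⟨w1, ⟨es1, hp1, rfl⟩, w2, ⟨es2, hp2, rfl⟩, rfl⟩
    refine ⟨es1.map (fun e => Sum.inl (Sum.inl e)) ++ ((Sum.inr () : (N1.seqC N2).E) ::
      es2.map (fun e => Sum.inl (Sum.inr e))), ?_, (N1.seqC_word N2 es1 es2).symm⟩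
    exact (hp1.map Sum.inl (fun e => Sum.inl (Sum.inl e)) (fun _ => by rfl) (fun _ => by rfl)).append
      (.cons rfl (hp2.map Sum.inr (fun e => Sum.inl (Sum.inr e)) (fun _ => by rfl) (fun _ => by rfl)))

end Combinators
section Xor

variable {A : Type}

/-- Exclusive choice. -/
def GNet.xorC (N1 N2 : GNet A) : GNet A where
  S := Unit ⊕ (N1.S ⊕ N2.S)
  E := (Bool ⊕ Unit) ⊕ (N1.E ⊕ N2.E)
  fS := inferInstance
  fE := inferInstance
  src e :=
    match e with
    | .inl (.inl _) => .inl ()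
    | .inl (.inr _) => .inr (.inr N2.o)
    | Sum.inr (Sum.inl e) => .inr (.inl (N1.src e))
    | Sum.inr (Sum.inr e) => .inr (.inr (N2.src e))
  tgt e :=
    match e with
    | .inl (.inl true) => .inr (.inl N1.i)
    | .inl (.inl false) => .inr (.inr N2.i)
    | .inl (.inr _) => .inr (.inl N1.o)
    | Sum.inr (Sum.inl e) => .inr (.inl (N1.tgt e))
    | Sum.inr (Sum.inr e) => .inr (.inr (N2.tgt e))
  lab e :=
    match e with
    | .inl _ => none
    | Sum.inr (Sum.inl e) => N1.lab e
    | Sum.inr (Sum.inr e) => N2.lab e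
  i := .inl ()
  o := .inr (.inl N1.o)
  sink e := by
    rcases e with (b | u) | (e | e) <;> intro h <;> simp at h
    exact N1.sink e h
  reach_i s := by
    rcases s with u | (s | s)
    · exact ⟨[], .nil _⟩
    · obtain ⟨es, hp⟩ := N1.reach_i s
      exact ⟨Sum.inl (Sum.inl true) :: es.map (fun e => Sum.inr (Sum.inl e)), .cons rfl
        (hp.map (fun s => Sum.inr (Sum.inl s)) (fun e => Sum.inr (Sum.inl e)) (fun _ => by rfl) (fun _ => by rfl))⟩
    · obtain ⟨es, hp⟩ := N2.reach_i s
      exact ⟨Sum.inl (Sum.inl false) :: es.map (fun e => Sum.inr (Sum.inr e)), .cons rfl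
        (hp.map (fun s => Sum.inr (Sum.inr s)) (fun e => Sum.inr (Sum.inr e)) (fun _ => by rfl) (fun _ => by rfl))⟩
  reach_o s := by
    rcases s with u | (s | s)
    · obtain ⟨es, hp⟩ := N1.reach_i N1.o
      exact ⟨Sum.inl (Sum.inl true) :: es.map (fun e => Sum.inr (Sum.inl e)), .cons rfl
        (hp.map (fun s => Sum.inr (Sum.inl s)) (fun e => Sum.inr (Sum.inl e)) (fun _ => by rfl) (fun _ => by rfl))⟩
    · obtain ⟨es, hp⟩ := N1.reach_o s
      exact ⟨es.map (fun e => Sum.inr (Sum.inl e)),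
        hp.map (fun s => Sum.inr (Sum.inl s)) (fun e => Sum.inr (Sum.inl e)) (fun _ => by rfl) (fun _ => by rfl)⟩
    · obtain ⟨es, hp⟩ := N2.reach_o s
      refine ⟨es.map (fun e => Sum.inr (Sum.inr e)) ++ [Sum.inl (Sum.inr ())], ?_⟩
      exact (hp.map (fun s => Sum.inr (Sum.inr s)) (fun e => Sum.inr (Sum.inr e)) (fun _ => by rfl)
        (fun _ => by rfl)).append (.single rfl)

theorem GNet.xorC_in1 (N1 N2 : GNet A) :
    ∀ {q x : (N1.xorC N2).S} {es}, EPath (N1.xorC N2).src (N1.xorC N2).tgt q es x →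
      ∀ s : N1.S, q = Sum.inr (Sum.inl s) →
      ∃ s' es1, x = Sum.inr (Sum.inl s') ∧
        es = (es1.map (fun e => Sum.inr (Sum.inl e)) : List (N1.xorC N2).E) ∧
        EPath N1.src N1.tgt s es1 s' := by
  intro q x es h
  induction h with
  | nil =>
    rintro s rfl
    exact ⟨s, [], rfl, rfl, .nil s⟩
  | @cons q x e es he hp ih =>
    rintro s rfl
    rcases e with (b | u) | (e1 | e2)
    · exact absurd he (by simp [GNet.xorC])
    · exact absurd he (by simp [GNet.xorC])
    · obtain ⟨s', es1, rfl, rfl, hp1⟩ := ih (N1.tgt e1) rfl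
      exact ⟨s', e1 :: es1, rfl, rfl, .cons (by simpa [GNet.xorC] using he) hp1⟩
    · exact absurd he (by simp [GNet.xorC])

theorem GNet.xorC_in2 (N1 N2 : GNet A) :
    ∀ {q x : (N1.xorC N2).S} {es}, EPath (N1.xorC N2).src (N1.xorC N2).tgt q es x →
      ∀ s : N2.S, q = Sum.inr (Sum.inr s) → x = Sum.inr (Sum.inl N1.o) →
      ∃ es2, es = (es2.map (fun e => Sum.inr (Sum.inr e)) ++ [Sum.inl (Sum.inr ())] :
          List (N1.xorC N2).E) ∧
        EPath N2.src N2.tgt s es2 N2.o := by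
  intro q x es h
  induction h with
  | nil =>
    rintro s rfl h
    simp [GNet.xorC] at h
  | @cons q x e es he hp ih =>
    rintro s rfl rfl
    rcases e with (b | u) | (e1 | e2)
    · exact absurd he (by simp [GNet.xorC])
    · -- the bridge from N2.o to N1.o
      have hs : N2.o = s := by simpa [GNet.xorC] using he
      subst hs
      obtain ⟨s', es1, hx, rfl, hp1⟩ := N1.xorC_in1 N2 hp N1.o rfl
      have hs' : N1.o = s' := by simpa [GNet.xorC] using hx
      subst hs'
      obtain ⟨rfl, -⟩ := hp1.sink_nil N1.sink
      exact ⟨[], rfl, .nil _⟩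
    · exact absurd he (by simp [GNet.xorC])
    · obtain ⟨es2, rfl, hp2⟩ := ih (N2.tgt e2) rfl rfl
      exact ⟨e2 :: es2, rfl, .cons (by simpa [GNet.xorC] using he) hp2⟩

theorem GNet.xorC_word1 (N1 N2 : GNet A) (es1 : List N1.E) :
    ((Sum.inl (Sum.inl true) :: es1.map (fun e => Sum.inr (Sum.inl e)) :
      List (N1.xorC N2).E)).filterMap (N1.xorC N2).lab = es1.filterMap N1.lab := by
  erw [List.filterMap_cons_toList,
    filterMap_emb (fun e => (Sum.inr (Sum.inl e) : (N1.xorC N2).E)) (N1.xorC N2).lab N1.lab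
      (fun e => rfl)]
  rfl

theorem GNet.xorC_word2 (N1 N2 : GNet A) (es2 : List N2.E) :
    ((Sum.inl (Sum.inl false) :: (es2.map (fun e => Sum.inr (Sum.inr e)) ++
      [Sum.inl (Sum.inr ())]) : List (N1.xorC N2).E)).filterMap (N1.xorC N2).lab =
      es2.filterMap N2.lab := by
  erw [List.filterMap_cons_toList, List.filterMap_append,
    filterMap_emb (fun e => (Sum.inr (Sum.inr e) : (N1.xorC N2).E)) (N1.xorC N2).lab N2.lab
      (fun e => rfl)]
  show [] ++ (List.filterMap N2.lab es2 ++ [] : List A) = _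
  simp

theorem GNet.xorC_lang (N1 N2 : GNet A) : (N1.xorC N2).lang = N1.lang + N2.lang := by
  ext w
  rw [Language.mem_add]
  constructor
  · rintro ⟨es, hp, rfl⟩
    cases hp with
    | @cons _ _ e es he hp' =>
      rcases e with (b | u) | (e1 | e2)
      · cases b
        · -- entered N2
          right
          obtain ⟨es2, rfl, hp2⟩ := N1.xorC_in2 N2 hp' N2.i rfl rfl
          exact ⟨es2, hp2, (N1.xorC_word2 N2 es2)⟩
        · -- entered N1
          left
          obtain ⟨s', es1, hx, rfl, hp1⟩ := N1.xorC_in1 N2 hp' N1.i rfl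
          have hs' : N1.o = s' := by simpa [GNet.xorC] using hx
          subst hs'
          exact ⟨es1, hp1, (N1.xorC_word1 N2 es1)⟩
      · exact absurd he (by simp [GNet.xorC])
      · exact absurd he (by simp [GNet.xorC])
      · exact absurd he (by simp [GNet.xorC])
  · rintro (⟨es1, hp1, rfl⟩ | ⟨es2, hp2, rfl⟩)
    · refine ⟨Sum.inl (Sum.inl true) :: es1.map (fun e => Sum.inr (Sum.inl e)), ?_,
        (N1.xorC_word1 N2 es1).symm⟩
      exact .cons rfl (hp1.map (fun s => Sum.inr (Sum.inl s)) (fun e => Sum.inr (Sum.inl e))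
        (fun _ => by rfl) (fun _ => by rfl))
    · refine ⟨Sum.inl (Sum.inl false) :: (es2.map (fun e => Sum.inr (Sum.inr e)) ++
        [Sum.inl (Sum.inr ())]), ?_, (N1.xorC_word2 N2 es2).symm⟩
      exact .cons rfl ((hp2.map (fun s => Sum.inr (Sum.inr s)) (fun e => Sum.inr (Sum.inr e))
        (fun _ => by rfl) (fun _ => by rfl)).append (.single rfl))

end Xor
section Loop

variable {A : Type}

open Computability

/-- Loop: `N1` is the body, `N2` the redo part. -/
def GNet.loopC (N1 N2 : GNet A) : GNet A where
  S := Unit ⊕ (N1.S ⊕ N2.S)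
  E := (Bool ⊕ Unit) ⊕ (N1.E ⊕ N2.E)
  fS := inferInstance
  fE := inferInstance
  src e :=
    match e with
    | .inl (.inl _) => .inr (.inl N1.o)
    | .inl (.inr _) => .inr (.inr N2.o)
    | .inr (.inl e) => .inr (.inl (N1.src e))
    | .inr (.inr e) => .inr (.inr (N2.src e))
  tgt e :=
    match e with
    | .inl (.inl true) => .inl ()
    | .inl (.inl false) => .inr (.inr N2.i)
    | .inl (.inr _) => .inr (.inl N1.i)
    | .inr (.inl e) => .inr (.inl (N1.tgt e))
    | .inr (.inr e) => .inr (.inr (N2.tgt e))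
  lab e :=
    match e with
    | .inl _ => none
    | .inr (.inl e) => N1.lab e
    | .inr (.inr e) => N2.lab e
  i := .inr (.inl N1.i)
  o := .inl ()
  sink e := by
    rcases e with (b | u) | (e | e) <;> simp
  reach_i s := by
    rcases s with u | (s | s)
    · obtain ⟨es, hp⟩ := N1.reach_o N1.i
      refine ⟨es.map (fun e => Sum.inr (Sum.inl e)) ++ [Sum.inl (Sum.inl true)], ?_⟩
      exact (hp.map (fun s => Sum.inr (Sum.inl s)) (fun e => Sum.inr (Sum.inl e))
        (fun _ => by rfl) (fun _ => by rfl)).append (.single rfl)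
    · obtain ⟨es, hp⟩ := N1.reach_i s
      exact ⟨es.map (fun e => Sum.inr (Sum.inl e)),
        hp.map (fun s => Sum.inr (Sum.inl s)) (fun e => Sum.inr (Sum.inl e))
        (fun _ => by rfl) (fun _ => by rfl)⟩
    · obtain ⟨es1, hp1⟩ := N1.reach_o N1.i
      obtain ⟨es2, hp2⟩ := N2.reach_i s
      refine ⟨es1.map (fun e => Sum.inr (Sum.inl e)) ++ (Sum.inl (Sum.inl false) ::
        es2.map (fun e => Sum.inr (Sum.inr e))), ?_⟩
      exact (hp1.map (fun s => Sum.inr (Sum.inl s)) (fun e => Sum.inr (Sum.inl e))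
        (fun _ => by rfl) (fun _ => by rfl)).append (.cons rfl
          (hp2.map (fun s => Sum.inr (Sum.inr s)) (fun e => Sum.inr (Sum.inr e))
            (fun _ => by rfl) (fun _ => by rfl)))
  reach_o s := by
    rcases s with u | (s | s)
    · exact ⟨[], .nil _⟩
    · obtain ⟨es, hp⟩ := N1.reach_o s
      refine ⟨es.map (fun e => Sum.inr (Sum.inl e)) ++ [Sum.inl (Sum.inl true)], ?_⟩
      exact (hp.map (fun s => Sum.inr (Sum.inl s)) (fun e => Sum.inr (Sum.inl e))
        (fun _ => by rfl) (fun _ => by rfl)).append (.single rfl)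
    · obtain ⟨es2, hp2⟩ := N2.reach_o s
      obtain ⟨es1, hp1⟩ := N1.reach_o N1.i
      refine ⟨es2.map (fun e => Sum.inr (Sum.inr e)) ++ (Sum.inl (Sum.inr ()) ::
        (es1.map (fun e => Sum.inr (Sum.inl e)) ++ [Sum.inl (Sum.inl true)])), ?_⟩
      exact (hp2.map (fun s => Sum.inr (Sum.inr s)) (fun e => Sum.inr (Sum.inr e))
        (fun _ => by rfl) (fun _ => by rfl)).append (.cons rfl
          ((hp1.map (fun s => Sum.inr (Sum.inl s)) (fun e => Sum.inr (Sum.inl e))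
            (fun _ => by rfl) (fun _ => by rfl)).append (.single rfl)))

/-- Embeddings of edges into the loop net. -/
def GNet.loopE1 (N1 N2 : GNet A) (e : N1.E) : (N1.loopC N2).E := Sum.inr (Sum.inl e)
def GNet.loopE2 (N1 N2 : GNet A) (e : N2.E) : (N1.loopC N2).E := Sum.inr (Sum.inr e)
def GNet.loopB (N1 N2 : GNet A) (b : Bool ⊕ Unit) : (N1.loopC N2).E := Sum.inl b

theorem GNet.loopC_sound (N1 N2 : GNet A) :
    ∀ {q x : (N1.loopC N2).S} {es}, EPath (N1.loopC N2).src (N1.loopC N2).tgt q es x →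
      x = Sum.inl () →
      (∀ s1 : N1.S, q = Sum.inr (Sum.inl s1) →
        es.filterMap (N1.loopC N2).lab ∈ N1.pathsTo s1 N1.o * (N2.lang * N1.lang)∗) ∧
      (∀ s2 : N2.S, q = Sum.inr (Sum.inr s2) →
        es.filterMap (N1.loopC N2).lab ∈
          N2.pathsTo s2 N2.o * (N1.lang * (N2.lang * N1.lang)∗)) ∧
      (q = Sum.inl () → es.filterMap (N1.loopC N2).lab = []) := by
  intro q x es h
  induction h with
  | nil =>
    rintro rfl
    refine ⟨?_, ?_, fun _ => rfl⟩
    · rintro s1 h; simp [GNet.loopC] at h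
    · rintro s2 h; simp [GNet.loopC] at h
  | @cons q x e es he hp ih =>
    rintro rfl
    have IH := ih rfl
    refine ⟨?_, ?_, ?_⟩
    · rintro s1 rfl
      rcases e with (b | u) | (e1 | e2)
      · cases b with
        | false =>
          -- redo bridge o1 → i2
          have hs : N1.o = s1 := by simpa [GNet.loopC] using he
          subst hs
          have h2 := IH.2.1 N2.i rfl
          obtain ⟨w2, hw2, r, hr, hcat⟩ := Language.mem_mul.mp h2
          obtain ⟨w1, hw1, r', hr', hcat'⟩ := Language.mem_mul.mp hr
          rw [Language.mem_mul]
          refine ⟨[], ⟨[], .nil _, rfl⟩, (w2 ++ w1) ++ r', ?_, ?_⟩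
          · exact kstar_cons (Language.mem_mul.mpr ⟨w2, hw2, w1, hw1, rfl⟩) hr'
          · show (w2 ++ w1) ++ r' = List.filterMap _ es
            rw [← hcat, ← hcat', List.append_assoc]
        | true =>
          -- exit bridge o1 → o
          have hs : N1.o = s1 := by simpa [GNet.loopC] using he
          subst hs
          have h3 := IH.2.2 rfl
          rw [Language.mem_mul]
          refine ⟨[], ⟨[], .nil _, rfl⟩, [], Language.nil_mem_kstar _, ?_⟩
          show ([] : List A) = List.filterMap _ es
          exact h3.symm
      · exact absurd he (by simp [GNet.loopC])
      · -- an N1 edge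
        have hs : N1.src e1 = s1 := by simpa [GNet.loopC] using he
        have h1 := IH.1 (N1.tgt e1) rfl
        obtain ⟨w1, ⟨es1', hp1, rfl⟩, r, hr, hcat⟩ := Language.mem_mul.mp h1
        rw [Language.mem_mul]
        refine ⟨(N1.lab e1).toList ++ es1'.filterMap N1.lab,
          ⟨e1 :: es1', .cons hs hp1, (List.filterMap_cons_toList _ _ _).symm⟩, r, hr, ?_⟩
        erw [List.filterMap_cons_toList, List.append_assoc, hcat]
        rfl
      · exact absurd he (by simp [GNet.loopC])
    · rintro s2 rfl
      rcases e with (b | u) | (e1 | e2)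
      · exact absurd he (by simp [GNet.loopC])
      · -- back bridge o2 → i1
        have hs : N2.o = s2 := by simpa [GNet.loopC] using he
        subst hs
        have h1 := IH.1 N1.i rfl
        rw [Language.mem_mul]
        exact ⟨[], ⟨[], .nil _, rfl⟩, es.filterMap (N1.loopC N2).lab, h1, rfl⟩
      · exact absurd he (by simp [GNet.loopC])
      · -- an N2 edge
        have hs : N2.src e2 = s2 := by simpa [GNet.loopC] using he
        have h2 := IH.2.1 (N2.tgt e2) rfl
        obtain ⟨w2, ⟨es2', hp2, rfl⟩, r, hr, hcat⟩ := Language.mem_mul.mp h2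
        rw [Language.mem_mul]
        refine ⟨(N2.lab e2).toList ++ es2'.filterMap N2.lab,
          ⟨e2 :: es2', .cons hs hp2, (List.filterMap_cons_toList _ _ _).symm⟩, r, hr, ?_⟩
        erw [List.filterMap_cons_toList, List.append_assoc, hcat]
        rfl
    · intro hq
      subst hq
      rcases e with (b | u) | (e1 | e2) <;> exact absurd he (by simp [GNet.loopC])

theorem GNet.loopC_complete (N1 N2 : GNet A) :
    ∀ l : List (List A), (∀ y ∈ l, y ∈ N2.lang * N1.lang) →
      ∃ es, EPath (N1.loopC N2).src (N1.loopC N2).tgt (Sum.inr (Sum.inl N1.o)) es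
          (Sum.inl ()) ∧
        es.filterMap (N1.loopC N2).lab = l.flatten := by
  intro l
  induction l with
  | nil =>
    intro _
    exact ⟨[N1.loopB N2 (Sum.inl true)], .single rfl, rfl⟩
  | cons y l ih =>
    intro h
    obtain ⟨w2, ⟨es2, hp2, rfl⟩, w1, ⟨es1, hp1, rfl⟩, hcat⟩ :=
      Language.mem_mul.mp (h y (List.mem_cons_self))
    obtain ⟨es', hp', hw'⟩ := ih (fun y hy => h y (List.mem_cons_of_mem _ hy))
    refine ⟨N1.loopB N2 (Sum.inl false) :: (es2.map (N1.loopE2 N2) ++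
      (N1.loopB N2 (Sum.inr ()) :: (es1.map (N1.loopE1 N2) ++ es'))), ?_, ?_⟩
    · refine .cons rfl ((hp2.map (fun s => Sum.inr (Sum.inr s)) (N1.loopE2 N2)
        (fun _ => by rfl) (fun _ => by rfl)).append (.cons rfl
          ((hp1.map (fun s => Sum.inr (Sum.inl s)) (N1.loopE1 N2)
            (fun _ => by rfl) (fun _ => by rfl)).append hp')))
    · show (es2.map (N1.loopE2 N2) ++
        (N1.loopB N2 (Sum.inr ()) :: (es1.map (N1.loopE1 N2) ++ es'))).filterMap
          (N1.loopC N2).lab = _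
      rw [List.filterMap_append, filterMap_emb (N1.loopE2 N2) (N1.loopC N2).lab N2.lab
        (fun e => rfl)]
      show List.filterMap N2.lab es2 ++
        ((es1.map (N1.loopE1 N2) ++ es').filterMap (N1.loopC N2).lab) = _
      rw [List.filterMap_append, filterMap_emb (N1.loopE1 N2) (N1.loopC N2).lab N1.lab
        (fun e => rfl), hw']
      rw [List.flatten_cons, ← hcat, List.append_assoc]

theorem GNet.loopC_lang (N1 N2 : GNet A) :
    (N1.loopC N2).lang = N1.lang * (N2.lang * N1.lang)∗ := by
  ext w
  constructor
  · rintro ⟨es, hp, rfl⟩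
    exact ((N1.loopC_sound N2) hp rfl).1 N1.i rfl
  · intro hw
    obtain ⟨w1, ⟨es1, hp1, rfl⟩, r, hr, hcat⟩ := Language.mem_mul.mp hw
    obtain ⟨l, rfl, hl⟩ := Language.mem_kstar.mp hr
    obtain ⟨es', hp', hw'⟩ := N1.loopC_complete N2 l hl
    refine ⟨es1.map (N1.loopE1 N2) ++ es', ?_, ?_⟩
    · exact (hp1.map (fun s => Sum.inr (Sum.inl s)) (N1.loopE1 N2)
        (fun _ => by rfl) (fun _ => by rfl)).append hp'
    · rw [List.filterMap_append, filterMap_emb (N1.loopE1 N2) (N1.loopC N2).lab N1.lab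
        (fun e => rfl), hw', hcat]

end Loop
section Par

variable {A : Type}

/-- Parallel composition: the product net. -/
def GNet.parC (N1 N2 : GNet A) : GNet A where
  S := N1.S × N2.S
  E := N1.E × N2.S ⊕ N1.S × N2.E
  fS := inferInstance
  fE := inferInstance
  src e :=
    match e with
    | .inl (e, s2) => (N1.src e, s2)
    | .inr (s1, e) => (s1, N2.src e)
  tgt e :=
    match e with
    | .inl (e, s2) => (N1.tgt e, s2)
    | .inr (s1, e) => (s1, N2.tgt e)
  lab e :=
    match e with
    | .inl (e, _) => N1.lab e
    | .inr (_, e) => N2.lab e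
  i := (N1.i, N2.i)
  o := (N1.o, N2.o)
  sink e := by
    rcases e with ⟨e, s2⟩ | ⟨s1, e⟩ <;> intro h
    · exact N1.sink e (congrArg Prod.fst h)
    · exact N2.sink e (congrArg Prod.snd h)
  reach_i s := by
    obtain ⟨s1, s2⟩ := s
    obtain ⟨es1, hp1⟩ := N1.reach_i s1
    obtain ⟨es2, hp2⟩ := N2.reach_i s2
    refine ⟨es1.map (fun e => Sum.inl (e, N2.i)) ++ es2.map (fun e => Sum.inr (s1, e)), ?_⟩
    exact (hp1.map (fun s => (s, N2.i)) (fun e => Sum.inl (e, N2.i))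
      (fun _ => by rfl) (fun _ => by rfl)).append
      (hp2.map (fun s => (s1, s)) (fun e => Sum.inr (s1, e))
        (fun _ => by rfl) (fun _ => by rfl))
  reach_o s := by
    obtain ⟨s1, s2⟩ := s
    obtain ⟨es1, hp1⟩ := N1.reach_o s1
    obtain ⟨es2, hp2⟩ := N2.reach_o s2
    refine ⟨es1.map (fun e => Sum.inl (e, s2)) ++ es2.map (fun e => Sum.inr (N1.o, e)), ?_⟩
    exact (hp1.map (fun s => (s, s2)) (fun e => Sum.inl (e, s2))
      (fun _ => by rfl) (fun _ => by rfl)).append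
      (hp2.map (fun s => (N1.o, s)) (fun e => Sum.inr (N1.o, e))
        (fun _ => by rfl) (fun _ => by rfl))

theorem GNet.parC_word1 (N1 N2 : GNet A) (e1 : N1.E) (s2 : N2.S)
    (es : List (N1.parC N2).E) :
    (Sum.inl (e1, s2) :: es).filterMap (N1.parC N2).lab =
      (N1.lab e1).toList ++ es.filterMap (N1.parC N2).lab := by
  erw [List.filterMap_cons_toList]
  rfl

theorem GNet.parC_word2 (N1 N2 : GNet A) (e2 : N2.E) (s1 : N1.S)
    (es : List (N1.parC N2).E) :
    (Sum.inr (s1, e2) :: es).filterMap (N1.parC N2).lab =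
      (N2.lab e2).toList ++ es.filterMap (N1.parC N2).lab := by
  erw [List.filterMap_cons_toList]
  rfl

theorem GNet.parC_proj (N1 N2 : GNet A) :
    ∀ {q x : (N1.parC N2).S} {es}, EPath (N1.parC N2).src (N1.parC N2).tgt q es x →
      ∃ es1 es2, EPath N1.src N1.tgt q.1 es1 x.1 ∧ EPath N2.src N2.tgt q.2 es2 x.2 ∧
        Sh (es1.filterMap N1.lab) (es2.filterMap N2.lab)
          (es.filterMap (N1.parC N2).lab) := by
  intro q x es h
  induction h with
  | nil => exact ⟨[], [], .nil _, .nil _, .nil⟩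
  | @cons q x e es he hp ih =>
    obtain ⟨es1, es2, h1, h2, hsh⟩ := ih
    rcases e with ⟨e1, s2⟩ | ⟨s1, e2⟩
    · subst he
      refine ⟨e1 :: es1, es2, .cons rfl h1, h2, ?_⟩
      erw [N1.parC_word1 N2, List.filterMap_cons_toList]
      exact hsh.append_left _
    · subst he
      refine ⟨es1, e2 :: es2, h1, .cons rfl h2, ?_⟩
      erw [N1.parC_word2 N2, List.filterMap_cons_toList]
      exact hsh.append_right _

theorem GNet.parC_complete (N1 N2 : GNet A) :
    ∀ (n : ℕ) (es1 : List N1.E) (es2 : List N2.E) (s1 t1 : N1.S) (s2 t2 : N2.S)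
      (w : List A), es1.length + es2.length ≤ n →
      EPath N1.src N1.tgt s1 es1 t1 → EPath N2.src N2.tgt s2 es2 t2 →
      Sh (es1.filterMap N1.lab) (es2.filterMap N2.lab) w →
      ∃ es, EPath (N1.parC N2).src (N1.parC N2).tgt (s1, s2) es (t1, t2) ∧
        es.filterMap (N1.parC N2).lab = w := by
  intro n
  induction n with
  | zero =>
    intro es1 es2 s1 t1 s2 t2 w hlen h1 h2 hsh
    obtain rfl : es1 = [] := List.length_eq_zero_iff.mp (by omega)
    obtain rfl : es2 = [] := List.length_eq_zero_iff.mp (by omega)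
    cases h1
    cases h2
    rw [hsh.nil_nil]
    exact ⟨[], .nil _, rfl⟩
  | succ n ih =>
    intro es1 es2 s1 t1 s2 t2 w hlen h1 h2 hsh
    cases es1 with
    | nil =>
      cases h1
      cases es2 with
      | nil =>
        cases h2
        rw [hsh.nil_nil]
        exact ⟨[], .nil _, rfl⟩
      | cons e2 es2' =>
        cases h2 with
        | cons he2 hp2 =>
          cases hl : N2.lab e2 with
          | none =>
            rw [List.filterMap_cons_toList, hl] at hsh
            obtain ⟨es, hp, hwm⟩ := ih [] es2' s1 s1 (N2.tgt e2) t2 w (by simp at hlen ⊢; omega)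
              (.nil _) hp2 (by simpa using hsh)
            refine ⟨Sum.inr (s1, e2) :: es, .cons (by rw [show (N1.parC N2).src
              (Sum.inr (s1, e2)) = (s1, N2.src e2) from rfl, he2]) hp, ?_⟩
            erw [N1.parC_word2 N2, hl, hwm]
            rfl
          | some b =>
            rw [List.filterMap_cons_toList, hl] at hsh
            obtain ⟨w', rfl, hsh'⟩ := hsh.nil_cons
            obtain ⟨es, hp, hwm⟩ := ih [] es2' s1 s1 (N2.tgt e2) t2 w' (by simp at hlen ⊢; omega)
              (.nil _) hp2 hsh'
            refine ⟨Sum.inr (s1, e2) :: es, .cons (by rw [show (N1.parC N2).src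
              (Sum.inr (s1, e2)) = (s1, N2.src e2) from rfl, he2]) hp, ?_⟩
            erw [N1.parC_word2 N2, hl, hwm]
            rfl
    | cons e1 es1' =>
      cases h1 with
      | cons he1 hp1 =>
        cases hl1 : N1.lab e1 with
        | none =>
          rw [List.filterMap_cons_toList, hl1] at hsh
          obtain ⟨es, hp, hwm⟩ := ih es1' es2 (N1.tgt e1) t1 s2 t2 w (by simp at hlen ⊢; omega)
            hp1 h2 (by simpa using hsh)
          refine ⟨Sum.inl (e1, s2) :: es, .cons (by rw [show (N1.parC N2).src
            (Sum.inl (e1, s2)) = (N1.src e1, s2) from rfl, he1]) hp, ?_⟩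
          erw [N1.parC_word1 N2, hl1, hwm]
          rfl
        | some a =>
          cases es2 with
          | nil =>
            cases h2
            rw [List.filterMap_cons_toList, hl1] at hsh
            obtain ⟨w', rfl, hsh'⟩ := hsh.cons_nil
            obtain ⟨es, hp, hwm⟩ := ih es1' [] (N1.tgt e1) t1 s2 s2 w'
              (by simp at hlen ⊢; omega) hp1 (.nil _) hsh'
            refine ⟨Sum.inl (e1, s2) :: es, .cons (by rw [show (N1.parC N2).src
              (Sum.inl (e1, s2)) = (N1.src e1, s2) from rfl, he1]) hp, ?_⟩
            erw [N1.parC_word1 N2, hl1, hwm]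
            rfl
          | cons e2 es2' =>
            cases h2 with
            | cons he2 hp2 =>
              cases hl2 : N2.lab e2 with
              | none =>
                rw [show (e2 :: es2').filterMap N2.lab = (N2.lab e2).toList ++
                  es2'.filterMap N2.lab from List.filterMap_cons_toList _ _ _, hl2] at hsh
                obtain ⟨es, hp, hwm⟩ := ih (e1 :: es1') es2' s1 t1 (N2.tgt e2) t2 w
                  (by simp at hlen ⊢; omega) (.cons he1 hp1) hp2 (by simpa using hsh)
                refine ⟨Sum.inr (s1, e2) :: es, .cons (by rw [show (N1.parC N2).src
                  (Sum.inr (s1, e2)) = (s1, N2.src e2) from rfl, he2]) hp, ?_⟩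
                erw [N1.parC_word2 N2, hl2, hwm]
                rfl
              | some b =>
                rw [List.filterMap_cons_toList, hl1,
                  show (e2 :: es2').filterMap N2.lab = (N2.lab e2).toList ++
                    es2'.filterMap N2.lab from List.filterMap_cons_toList _ _ _, hl2] at hsh
                rcases (by simpa using hsh :
                    Sh (a :: es1'.filterMap N1.lab) (b :: es2'.filterMap N2.lab) w).cons_cons
                  with ⟨w', rfl, hsh'⟩ | ⟨w', rfl, hsh'⟩
                · obtain ⟨es, hp, hwm⟩ := ih es1' (e2 :: es2') (N1.tgt e1) t1 s2 t2 w'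
                    (by simp at hlen ⊢; omega) hp1 (.cons he2 hp2)
                    (by rw [show (e2 :: es2').filterMap N2.lab = (N2.lab e2).toList ++
                      es2'.filterMap N2.lab from List.filterMap_cons_toList _ _ _, hl2]
                        exact hsh')
                  refine ⟨Sum.inl (e1, s2) :: es, .cons (by rw [show (N1.parC N2).src
                    (Sum.inl (e1, s2)) = (N1.src e1, s2) from rfl, he1]) hp, ?_⟩
                  erw [N1.parC_word1 N2, hl1, hwm]
                  rfl
                · obtain ⟨es, hp, hwm⟩ := ih (e1 :: es1') es2' s1 t1 (N2.tgt e2) t2 w'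
                    (by simp at hlen ⊢; omega) (.cons he1 hp1) hp2
                    (by rw [List.filterMap_cons_toList, hl1]
                        exact hsh')
                  refine ⟨Sum.inr (s1, e2) :: es, .cons (by rw [show (N1.parC N2).src
                    (Sum.inr (s1, e2)) = (s1, N2.src e2) from rfl, he2]) hp, ?_⟩
                  erw [N1.parC_word2 N2, hl2, hwm]
                  rfl

theorem GNet.parC_lang (N1 N2 : GNet A) :
    (N1.parC N2).lang = N1.lang.shuffle N2.lang := by
  ext w
  rw [mem_shuffle_iff]
  constructor
  · rintro ⟨es, hp, rfl⟩
    obtain ⟨es1, es2, h1, h2, hsh⟩ := N1.parC_proj N2 hp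
    exact ⟨_, ⟨es1, h1, rfl⟩, _, ⟨es2, h2, rfl⟩, hsh⟩
  · rintro ⟨x, ⟨es1, hp1, rfl⟩, y, ⟨es2, hp2, rfl⟩, hsh⟩
    obtain ⟨es, hp, hw⟩ := N1.parC_complete N2 (es1.length + es2.length) es1 es2
      N1.i N1.o N2.i N2.o w le_rfl hp1 hp2 hsh
    exact ⟨es, hp, hw.symm⟩

end Par
section TopLevel

variable {A : Type}

theorem seq_list : ∀ ts : List (ProcessTree A), ts ≠ [] →
    (∀ t ∈ ts, ∃ N : GNet A, N.lang = ptLang t) →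
    ∃ N : GNet A, N.lang = ptSeqLang ts := by
  intro ts
  induction ts with
  | nil => intro h; exact absurd rfl h
  | cons t ts ih =>
    intro _ h
    obtain ⟨N1, hN1⟩ := h t (List.mem_cons_self)
    by_cases hts : ts = []
    · subst hts
      exact ⟨N1, by rw [hN1, show ptSeqLang [t] = ptLang t * 1 from rfl, mul_one]⟩
    · obtain ⟨N2, hN2⟩ := ih hts (fun t' ht' => h t' (List.mem_cons_of_mem _ ht'))
      exact ⟨N1.seqC N2, by rw [GNet.seqC_lang, hN1, hN2]; rfl⟩

theorem xor_list : ∀ ts : List (ProcessTree A), ts ≠ [] →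
    (∀ t ∈ ts, ∃ N : GNet A, N.lang = ptLang t) →
    ∃ N : GNet A, N.lang = ptXorLang ts := by
  intro ts
  induction ts with
  | nil => intro h; exact absurd rfl h
  | cons t ts ih =>
    intro _ h
    obtain ⟨N1, hN1⟩ := h t (List.mem_cons_self)
    by_cases hts : ts = []
    · subst hts
      exact ⟨N1, by rw [hN1, show ptXorLang [t] = ptLang t + 0 from rfl, add_zero]⟩
    · obtain ⟨N2, hN2⟩ := ih hts (fun t' ht' => h t' (List.mem_cons_of_mem _ ht'))
      exact ⟨N1.xorC N2, by rw [GNet.xorC_lang, hN1, hN2]; rfl⟩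

theorem par_list : ∀ ts : List (ProcessTree A), ts ≠ [] →
    (∀ t ∈ ts, ∃ N : GNet A, N.lang = ptLang t) →
    ∃ N : GNet A, N.lang = ptParLang ts := by
  intro ts
  induction ts with
  | nil => intro h; exact absurd rfl h
  | cons t ts ih =>
    intro _ h
    obtain ⟨N1, hN1⟩ := h t (List.mem_cons_self)
    by_cases hts : ts = []
    · subst hts
      exact ⟨N1, by
        rw [hN1, show ptParLang [t] = (ptLang t).shuffle (ptParLang []) from rfl,
          show ptParLang ([] : List (ProcessTree A)) = 1 from rfl, shuffle_one]⟩
    · obtain ⟨N2, hN2⟩ := ih hts (fun t' ht' => h t' (List.mem_cons_of_mem _ ht'))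
      exact ⟨N1.parC N2, by rw [GNet.parC_lang, hN1, hN2]; rfl⟩

theorem exists_gnet : ∀ (t : ProcessTree A), t.WF → ∃ N : GNet A, N.lang = ptLang t := by
  intro t hwf
  induction hwf with
  | silent =>
    refine ⟨GNet.base none, ?_⟩
    rw [GNet.base_lang]
    ext w
    show w = Option.toList none ↔ w ∈ (1 : Language A)
    rw [Language.mem_one]
    exact Iff.rfl
  | act a =>
    refine ⟨GNet.base (some a), ?_⟩
    rw [GNet.base_lang]
    ext w
    show w = Option.toList (some a) ↔ w ∈ ({[a]} : Language A)
    show w = [a] ↔ w = [a]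
    exact Iff.rfl
  | seq ts hne _ ih => exact seq_list ts hne ih
  | xor ts hne _ ih => exact xor_list ts hne ih
  | par ts hne _ ih => exact par_list ts hne ih
  | loop t1 t2 _ _ ih1 ih2 =>
    obtain ⟨N1, hN1⟩ := ih1
    obtain ⟨N2, hN2⟩ := ih2
    exact ⟨N1.loopC N2, by rw [GNet.loopC_lang, hN1, hN2]; rfl⟩

end TopLevel

/-- For every process tree `t` over `A` there exists a safe and sound free-choice workflow
net whose language equals the language of the process tree. -/
theorem processTree_to_wfnet {A : Type} [Fintype A] (t : ProcessTree A) (hwf : t.WF) :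
    ∃ (np nt : ℕ) (W : WorkflowNet (Fin np) (Fin nt) A),
      Bounded W.net (unitM W.i) 1 ∧
      WSound W ∧
      W.net.FreeChoice ∧
      wfLang W = ptLang t := by
  obtain ⟨N, hN⟩ := exists_gnet t hwf
  obtain ⟨np, nt, W, h1, h2, h3, h4⟩ := N.master
  exact ⟨np, nt, W, h1, h2, h3, by rw [h4, hN]⟩
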